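/- arXiv:1501.04933 — 5 statements merged into one kernel-verified Lean document; each statement's English description precedes it below -/
import Mathlib

section
/- Let A be a p×p real symmetric matrix, let V be a p×d matrix (d < p) with orthonormal columns, Π = VVᵀ, and let U be a p×(p−d) matrix whose columns form an orthonormal basis of the orthogonal complement of the column space of V. Let UᵀAU = Σ_{i=1}^{p−d} γ_i η_i η_iᵀ be an orthonormal eigendecomposition, and for θ ∈ ℝ set γ_i⁺(θ) = min(max(γ_i − θ, 0), 1). Then there exists θ with Σ_{i=1}^{p−d} γ_i⁺(θ) = 1, and the unique minimizer of ‖A − B‖_F² over B ∈ D_Π equals U[Σ_{i=1}^{p−d} γ_i⁺(θ) η_i η_iᵀ]Uᵀ. -/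
open Matrix Finset

noncomputable def frobInner {p : ℕ} (A B : Matrix (Fin p) (Fin p) ℝ) : ℝ := (Aᵀ * B).trace

noncomputable def frobNorm {a b : ℕ} (A : Matrix (Fin a) (Fin b) ℝ) : ℝ :=
  Real.sqrt (∑ i, ∑ j, (A i j) ^ 2)

def fantope1 {p : ℕ} : Set (Matrix (Fin p) (Fin p) ℝ) :=
  {H | H.PosSemidef ∧ ((1 : Matrix (Fin p) (Fin p) ℝ) - H).PosSemidef ∧ H.trace = 1}

def deflatedFantope {p : ℕ} (P : Matrix (Fin p) (Fin p) ℝ) : Set (Matrix (Fin p) (Fin p) ℝ) :=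
  {H | H ∈ fantope1 ∧ frobInner H P = 0}

/-!
Conjugation by `U` identifies the deflated Fantope `D_Π` with the Fantope `F¹` in dimension
`p - d`: a matrix `B ∈ D_Π` is positive semidefinite with `⟨B, VVᵀ⟩ = 0`, so it annihilates the
columns of `V` and `B = U (UᵀBU) Uᵀ`. For `X = U C Uᵀ` with `C = ∑ xᵢ ηᵢηᵢᵀ`, where `x` are the
clipped shifted eigenvalues, one gets `⟨A - X, B - X⟩ = ∑ (γᵢ - xᵢ)(hᵢ - xᵢ)` with
`hᵢ = ηᵢᵀ (UᵀBU) ηᵢ` in the capped simplex `{0 ≤ h ≤ 1, ∑ h = 1}`. Since `x` is the projection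
of `γ` onto that capped simplex (`θ` being the multiplier of `∑ h = 1`, found by the intermediate
value theorem), the sum is `≤ 0`, and the obtuse-angle criterion makes `X` the unique nearest point.
-/

lemma sub_min_max_mul_sub_nonpos (t : ℝ) {h : ℝ} (h0 : 0 ≤ h) (h1 : h ≤ 1) :
    (t - min (max t 0) 1) * (h - min (max t 0) 1) ≤ 0 := by
  rcases le_total t 0 with ht | ht
  · rw [max_eq_right ht, min_eq_left zero_le_one]; nlinarith
  rcases le_total t 1 with ht' | ht'
  · simp [max_eq_left ht, min_eq_left ht']
  · rw [max_eq_left ht, min_eq_right ht']; nlinarith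

lemma sum_sub_min_max_mul_sub_nonpos {ι : Type*} [Fintype ι] (γ : ι → ℝ) {θ : ℝ}
    (hθ : ∑ i, min (max (γ i - θ) 0) 1 = 1) {h : ι → ℝ} (h0 : ∀ i, 0 ≤ h i)
    (h1 : ∀ i, h i ≤ 1) (hsum : ∑ i, h i = 1) :
    ∑ i, (γ i - min (max (γ i - θ) 0) 1) * (h i - min (max (γ i - θ) 0) 1) ≤ 0 := by
  set x := fun i => min (max (γ i - θ) 0) 1
  have hsplit : ∀ i, (γ i - x i) * (h i - x i) = (γ i - θ - x i) * (h i - x i) + θ * (h i - x i) :=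
    fun i => by ring
  rw [sum_congr rfl fun i _ => hsplit i, sum_add_distrib, ← mul_sum, sum_sub_distrib, hsum, hθ,
    sub_self, mul_zero, add_zero]
  exact sum_nonpos fun i _ => sub_min_max_mul_sub_nonpos _ (h0 i) (h1 i)

lemma exists_sum_min_max_eq_one {ι : Type*} [Fintype ι] [Nonempty ι] (γ : ι → ℝ) :
    ∃ θ, ∑ i, min (max (γ i - θ) 0) 1 = 1 := by
  set f : ℝ → ℝ := fun θ => ∑ i, min (max (γ i - θ) 0) 1
  have hf : Continuous f := by fun_prop
  have hlow : f (univ.sup' univ_nonempty γ) = 0 := by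
    refine sum_eq_zero fun i _ => ?_
    rw [max_eq_right (sub_nonpos.mpr (le_sup' γ (mem_univ i))), min_eq_left zero_le_one]
  have hhigh : f (univ.inf' univ_nonempty γ - 1) = Fintype.card ι := by
    rw [← nsmul_one, ← card_univ, ← sum_const]
    refine sum_congr rfl fun i _ => ?_
    have := inf'_le γ (mem_univ i)
    rw [max_eq_left (by linarith), min_eq_right (by linarith)]
  have hone :
      (1 : ℝ) ∈ Set.Icc (f (univ.sup' univ_nonempty γ)) (f (univ.inf' univ_nonempty γ - 1)) := by
    rw [hlow, hhigh]
    exact ⟨zero_le_one, mod_cast Fintype.card_pos⟩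
  exact intermediate_value_univ _ _ hf hone

section Frobenius

variable {p : ℕ}

lemma frobInner_eq_sum (A B : Matrix (Fin p) (Fin p) ℝ) :
    frobInner A B = ∑ i, ∑ j, A i j * B i j := by
  simp only [frobInner, trace, diag_apply, mul_apply, transpose_apply]
  exact sum_comm

lemma frobNorm_eq_sqrt_frobInner (M : Matrix (Fin p) (Fin p) ℝ) :
    frobNorm M = √(frobInner M M) := by
  simp only [frobNorm, frobInner_eq_sum, sq]

lemma frobInner_self_nonneg (M : Matrix (Fin p) (Fin p) ℝ) : 0 ≤ frobInner M M := by
  simpa [frobInner, conjTranspose_eq_transpose_of_trivial] using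
    (posSemidef_conjTranspose_mul_self M).trace_nonneg

lemma frobInner_self_eq_zero {M : Matrix (Fin p) (Fin p) ℝ} : frobInner M M = 0 ↔ M = 0 := by
  simpa [frobInner, conjTranspose_eq_transpose_of_trivial] using
    trace_conjTranspose_mul_self_eq_zero_iff (A := M)

lemma frobInner_conj {q : ℕ} (M : Matrix (Fin p) (Fin p) ℝ) (U : Matrix (Fin p) (Fin q) ℝ)
    (D : Matrix (Fin q) (Fin q) ℝ) : frobInner M (U * D * Uᵀ) = frobInner (Uᵀ * M * U) D := by
  rw [frobInner, frobInner, ← Matrix.mul_assoc, trace_mul_comm, transpose_mul, transpose_mul,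
    transpose_transpose]
  simp only [Matrix.mul_assoc]

lemma frobInner_sum_smul_vecMulVec (c : Fin p → ℝ) (η : Fin p → Fin p → ℝ)
    (D : Matrix (Fin p) (Fin p) ℝ) :
    frobInner (∑ i, c i • vecMulVec (η i) (η i)) D = ∑ i, c i * (η i ⬝ᵥ D *ᵥ η i) := by
  simp only [frobInner, transpose_sum, transpose_smul, transpose_vecMulVec, Matrix.sum_mul,
    trace_sum, smul_mul, trace_smul, vecMulVec_mul, trace_vecMulVec, smul_eq_mul,
    dotProduct_mulVec]
  exact sum_congr rfl fun i _ => by rw [dotProduct_comm]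

lemma frobNorm_sub_le_of_frobInner_nonpos {A X B : Matrix (Fin p) (Fin p) ℝ}
    (h : frobInner (A - X) (B - X) ≤ 0) :
    frobNorm (A - X) ≤ frobNorm (A - B) ∧ (frobNorm (A - B) = frobNorm (A - X) → B = X) := by
  have hpyth : frobInner (A - B) (A - B) = frobInner (A - X) (A - X)
      - 2 * frobInner (A - X) (B - X) + frobInner (B - X) (B - X) := by
    simp only [frobInner_eq_sum, mul_sum, ← sum_sub_distrib, ← sum_add_distrib]
    refine sum_congr rfl fun i _ => sum_congr rfl fun j _ => ?_
    simp only [Matrix.sub_apply]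
    ring
  have hBX := frobInner_self_nonneg (B - X)
  simp only [frobNorm_eq_sqrt_frobInner]
  refine ⟨Real.sqrt_le_sqrt (by linarith), fun heq => ?_⟩
  rw [Real.sqrt_inj (frobInner_self_nonneg _) (frobInner_self_nonneg _)] at heq
  exact sub_eq_zero.mp (frobInner_self_eq_zero.mp (by linarith))

end Frobenius

lemma posSemidef_sum_smul_vecMulVec {ι m : Type*} [Fintype ι] [Fintype m] {c : ι → ℝ}
    (hc : ∀ i, 0 ≤ c i) {η : ι → m → ℝ} : (∑ i, c i • vecMulVec (η i) (η i)).PosSemidef :=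
  posSemidef_sum _ fun i _ => by simpa using (posSemidef_vecMulVec_self_star (η i)).smul (hc i)

section Orthonormal

variable {n : ℕ} {η : Fin n → Fin n → ℝ}

lemma sum_vecMulVec_self_eq_one (hη : ∀ i j, η i ⬝ᵥ η j = if i = j then (1 : ℝ) else 0) :
    ∑ i, vecMulVec (η i) (η i) = 1 := by
  have hrows : Matrix.of η * (Matrix.of η)ᵀ = 1 := by
    ext i j
    simpa [mul_apply, dotProduct, one_apply] using hη i j
  rw [← mul_eq_one_comm.mp hrows]
  ext j k
  simp [Matrix.sum_apply, mul_apply, vecMulVec_apply]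

lemma sum_smul_vecMulVec_mulVec (hη : ∀ i j, η i ⬝ᵥ η j = if i = j then (1 : ℝ) else 0)
    (c : Fin n → ℝ) (i : Fin n) :
    (∑ j, c j • vecMulVec (η j) (η j)) *ᵥ η i = c i • η i := by
  simp [sum_mulVec, smul_mulVec, vecMulVec_mulVec, hη]

lemma sum_dotProduct_mulVec_eq_trace (hη : ∀ i j, η i ⬝ᵥ η j = if i = j then (1 : ℝ) else 0)
    (D : Matrix (Fin n) (Fin n) ℝ) :
    ∑ i, η i ⬝ᵥ D *ᵥ η i = D.trace := by
  simpa [sum_vecMulVec_self_eq_one hη, frobInner] using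
    (frobInner_sum_smul_vecMulVec (fun _ => 1) η D).symm

lemma sum_smul_vecMulVec_mem_fantope1 (hη : ∀ i j, η i ⬝ᵥ η j = if i = j then (1 : ℝ) else 0)
    {c : Fin n → ℝ} (h0 : ∀ i, 0 ≤ c i) (h1 : ∀ i, c i ≤ 1) (hsum : ∑ i, c i = 1) :
    ∑ i, c i • vecMulVec (η i) (η i) ∈ fantope1 := by
  refine ⟨posSemidef_sum_smul_vecMulVec h0, ?_, ?_⟩
  · have : (1 : Matrix (Fin n) (Fin n) ℝ) - ∑ i, c i • vecMulVec (η i) (η i)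
        = ∑ i, (1 - c i) • vecMulVec (η i) (η i) := by
      simp [sub_smul, sum_sub_distrib, sum_vecMulVec_self_eq_one hη]
    rw [this]
    exact posSemidef_sum_smul_vecMulVec fun i => sub_nonneg.mpr (h1 i)
  · simp [trace_sum, trace_vecMulVec, hη, hsum]

lemma dotProduct_mulVec_mem_Icc_of_mem_fantope1
    (hη : ∀ i j, η i ⬝ᵥ η j = if i = j then (1 : ℝ) else 0)
    {H : Matrix (Fin n) (Fin n) ℝ} (hH : H ∈ fantope1) (i : Fin n) :
    η i ⬝ᵥ H *ᵥ η i ∈ Set.Icc 0 1 := by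
  obtain ⟨hpsd, hpsd', -⟩ := hH
  have h0 := hpsd.dotProduct_mulVec_nonneg (η i)
  have h1 := hpsd'.dotProduct_mulVec_nonneg (η i)
  simp only [star_trivial, sub_mulVec, one_mulVec, dotProduct_sub, hη, if_pos] at h0 h1
  exact ⟨h0, by simpa using h1⟩

end Orthonormal

lemma mul_transpose_add_mul_transpose_eq_one {R k m n : Type*} [CommRing R] [Fintype k]
    [DecidableEq k] [Fintype m] [DecidableEq m] [Fintype n] [DecidableEq n]
    (hcard : Fintype.card m + Fintype.card n = Fintype.card k) {V : Matrix k m R}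
    {U : Matrix k n R} (hV : Vᵀ * V = 1) (hU : Uᵀ * U = 1) (hVU : Vᵀ * U = 0) :
    V * Vᵀ + U * Uᵀ = 1 := by
  have hUV : Uᵀ * V = 0 := by simpa using congrArg transpose hVU
  have horth : fromRows Vᵀ Uᵀ * fromCols V U = 1 := by
    rw [fromRows_mul_fromCols, hV, hU, hVU, hUV, fromBlocks_one]
  rw [← fromCols_mul_fromRows]
  exact (mul_eq_one_comm_of_card_eq (m ⊕ n) k R (by simpa using hcard)).mp horth

open scoped ComplexOrder MatrixOrder in
lemma Matrix.PosSemidef.mul_eq_zero_of_trace_conjTranspose_mul_mul_eq_zero {𝕜 k m : Type*}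
    [RCLike 𝕜] [Fintype k] [DecidableEq k] [Fintype m] {B : Matrix k k 𝕜} (hB : B.PosSemidef)
    {V : Matrix k m 𝕜} (h : (Vᴴ * B * V).trace = 0) : B * V = 0 := by
  obtain ⟨L, rfl⟩ := CStarAlgebra.nonneg_iff_eq_star_mul_self.mp hB.nonneg
  have hLV : L * V = 0 := by
    rw [← trace_conjTranspose_mul_self_eq_zero_iff, conjTranspose_mul]
    simpa [star_eq_conjTranspose, Matrix.mul_assoc] using h
  rw [star_eq_conjTranspose, Matrix.mul_assoc, hLV, Matrix.mul_zero]

section Deflation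

variable {p q r : ℕ} {V : Matrix (Fin p) (Fin q) ℝ} {U : Matrix (Fin p) (Fin r) ℝ}

lemma conj_mem_deflatedFantope (hcomp : V * Vᵀ + U * Uᵀ = 1) (hU : Uᵀ * U = 1)
    (hVU : Vᵀ * U = 0) {H : Matrix (Fin r) (Fin r) ℝ} (hH : H ∈ fantope1) :
    U * H * Uᵀ ∈ deflatedFantope (V * Vᵀ) := by
  obtain ⟨hpsd, hpsd', htr⟩ := hH
  have hsplit :
      1 - U * H * Uᵀ = V * (1 : Matrix (Fin q) (Fin q) ℝ) * Vᵀ + U * (1 - H) * Uᵀ := by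
    rw [Matrix.mul_one, Matrix.mul_sub, Matrix.sub_mul, Matrix.mul_one, ← hcomp]
    abel
  refine ⟨⟨?_, ?_, ?_⟩, ?_⟩
  · simpa [conjTranspose_eq_transpose_of_trivial] using hpsd.mul_mul_conjTranspose_same U
  · rw [hsplit]
    simpa [conjTranspose_eq_transpose_of_trivial] using
      (PosSemidef.one.mul_mul_conjTranspose_same V).add (hpsd'.mul_mul_conjTranspose_same U)
  · rw [trace_mul_comm, ← Matrix.mul_assoc, hU, Matrix.one_mul, htr]
  · have hUV : Uᵀ * (V * Vᵀ) = 0 := by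
      rw [← Matrix.mul_assoc, show Uᵀ * V = 0 by simpa using congrArg transpose hVU,
        Matrix.zero_mul]
    simp [frobInner, transpose_mul, Matrix.mul_assoc, hUV]

lemma conj_mem_fantope1_of_mem_deflatedFantope (hcomp : V * Vᵀ + U * Uᵀ = 1) (hU : Uᵀ * U = 1)
    {B : Matrix (Fin p) (Fin p) ℝ} (hB : B ∈ deflatedFantope (V * Vᵀ)) :
    Uᵀ * B * U ∈ fantope1 ∧ B = U * (Uᵀ * B * U) * Uᵀ := by
  obtain ⟨⟨hpsd, hpsd', htr⟩, hBP⟩ := hB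
  have hsymm : Bᵀ = B := by simpa [conjTranspose_eq_transpose_of_trivial] using hpsd.1.eq
  have hBV : B * V = 0 := by
    refine hpsd.mul_eq_zero_of_trace_conjTranspose_mul_mul_eq_zero ?_
    rwa [conjTranspose_eq_transpose_of_trivial, Matrix.mul_assoc, trace_mul_comm, Matrix.mul_assoc,
      ← hsymm]
  have hBUU : B * (U * Uᵀ) = B := by
    rw [← add_sub_cancel_left (V * Vᵀ) (U * Uᵀ), hcomp, Matrix.mul_sub, ← Matrix.mul_assoc, hBV,
      Matrix.zero_mul, Matrix.mul_one, sub_zero]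
  refine ⟨⟨?_, ?_, ?_⟩, ?_⟩
  · simpa [conjTranspose_eq_transpose_of_trivial] using hpsd.conjTranspose_mul_mul_same U
  · rw [← hU]
    simpa [conjTranspose_eq_transpose_of_trivial, Matrix.mul_sub, Matrix.sub_mul] using
      hpsd'.conjTranspose_mul_mul_same U
  · rw [Matrix.mul_assoc, trace_mul_comm, Matrix.mul_assoc, hBUU, htr]
  · have hUUB : U * Uᵀ * B = B := by
      simpa [transpose_mul, hsymm] using congrArg transpose hBUU
    rw [show U * (Uᵀ * B * U) * Uᵀ = U * Uᵀ * B * (U * Uᵀ) by simp only [Matrix.mul_assoc],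
      hUUB, hBUU]

end Deflation

theorem stmt2_general {p d : ℕ} (hd : d < p)
    (A : Matrix (Fin p) (Fin p) ℝ)
    (V : Matrix (Fin p) (Fin d) ℝ) (hV : Vᵀ * V = 1)
    (U : Matrix (Fin p) (Fin (p - d)) ℝ) (hU : Uᵀ * U = 1) (hVU : Vᵀ * U = 0)
    (γ : Fin (p - d) → ℝ) (η : Fin (p - d) → Fin (p - d) → ℝ)
    (hη : ∀ i j, (η i) ⬝ᵥ (η j) = if i = j then (1:ℝ) else 0)
    (hdecomp : Uᵀ * A * U = ∑ i, γ i • vecMulVec (η i) (η i)) :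
    ∃ θ : ℝ, (∑ i, min (max (γ i - θ) 0) 1) = 1 ∧
      (U * (∑ i, (min (max (γ i - θ) 0) 1) • vecMulVec (η i) (η i)) * Uᵀ)
          ∈ deflatedFantope (V * Vᵀ) ∧
      ∀ B ∈ deflatedFantope (V * Vᵀ),
        frobNorm (A - U * (∑ i, (min (max (γ i - θ) 0) 1) • vecMulVec (η i) (η i)) * Uᵀ)
            ≤ frobNorm (A - B) ∧
        (frobNorm (A - B)
            = frobNorm (A - U * (∑ i, (min (max (γ i - θ) 0) 1) • vecMulVec (η i) (η i)) * Uᵀ)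
          → B = U * (∑ i, (min (max (γ i - θ) 0) 1) • vecMulVec (η i) (η i)) * Uᵀ) := by
  have hcomp : V * Vᵀ + U * Uᵀ = 1 :=
    mul_transpose_add_mul_transpose_eq_one (by simp; omega) hV hU hVU
  have : Nonempty (Fin (p - d)) := ⟨⟨0, by omega⟩⟩
  obtain ⟨θ, hθ⟩ := exists_sum_min_max_eq_one γ
  set x : Fin (p - d) → ℝ := fun i => min (max (γ i - θ) 0) 1
  set C := ∑ i, x i • vecMulVec (η i) (η i)
  have hC : C ∈ fantope1 := sum_smul_vecMulVec_mem_fantope1 hη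
    (fun i => le_min (le_max_right _ _) zero_le_one) (fun i => min_le_right _ _) hθ
  have hCη : ∀ i, C *ᵥ η i = x i • η i := sum_smul_vecMulVec_mulVec hη x
  refine ⟨θ, hθ, conj_mem_deflatedFantope hcomp hU hVU hC, fun B hB => ?_⟩
  obtain ⟨hB', hBeq⟩ := conj_mem_fantope1_of_mem_deflatedFantope hcomp hU hB
  set B' := Uᵀ * B * U
  have hUCU : Uᵀ * (U * C * Uᵀ) * U = C := by
    simp only [← Matrix.mul_assoc, hU, Matrix.one_mul]
    rw [Matrix.mul_assoc, hU, Matrix.mul_one]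
  have hresidual : Uᵀ * (A - U * C * Uᵀ) * U = ∑ i, (γ i - x i) • vecMulVec (η i) (η i) := by
    simp only [Matrix.mul_sub, Matrix.sub_mul, hdecomp, hUCU, sub_smul, sum_sub_distrib, C]
  apply frobNorm_sub_le_of_frobInner_nonpos
  calc frobInner (A - U * C * Uᵀ) (B - U * C * Uᵀ)
      = frobInner (A - U * C * Uᵀ) (U * (B' - C) * Uᵀ) := by
        rw [Matrix.mul_sub, Matrix.sub_mul, ← hBeq]
    _ = ∑ i, (γ i - x i) * (η i ⬝ᵥ B' *ᵥ η i - x i) := by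
        rw [frobInner_conj, hresidual, frobInner_sum_smul_vecMulVec]
        simp [sub_mulVec, hCη, hη]
    _ ≤ 0 := sum_sub_min_max_mul_sub_nonpos γ hθ
        (fun i => (dotProduct_mulVec_mem_Icc_of_mem_fantope1 hη hB' i).1)
        (fun i => (dotProduct_mulVec_mem_Icc_of_mem_fantope1 hη hB' i).2)
        (by rw [sum_dotProduct_mulVec_eq_trace hη, hB'.2.2])

/-- closed form of the Frobenius projection onto the deflated Fantope.
With A symmetric, Π = VVᵀ for V with orthonormal columns, U an orthonormal basis of the
orthogonal complement of col(V), and UᵀAU = Σ γ_i η_i η_iᵀ an orthonormal eigendecomposition,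
there is θ with Σ_i min(max(γ_i − θ,0),1) = 1 and U[Σ_i γ_i⁺(θ) η_i η_iᵀ]Uᵀ is the unique
minimizer of ‖A − B‖_F over B ∈ D_Π. -/
theorem stmt2 {p d : ℕ} (hd : d < p)
    (A : Matrix (Fin p) (Fin p) ℝ) (hA : A.IsSymm)
    (V : Matrix (Fin p) (Fin d) ℝ) (hV : Vᵀ * V = 1)
    (U : Matrix (Fin p) (Fin (p - d)) ℝ) (hU : Uᵀ * U = 1) (hVU : Vᵀ * U = 0)
    (γ : Fin (p - d) → ℝ) (η : Fin (p - d) → Fin (p - d) → ℝ)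
    (hη : ∀ i j, (η i) ⬝ᵥ (η j) = if i = j then (1:ℝ) else 0)
    (hdecomp : Uᵀ * A * U = ∑ i, γ i • vecMulVec (η i) (η i)) :
    ∃ θ : ℝ, (∑ i, min (max (γ i - θ) 0) 1) = 1 ∧
      (U * (∑ i, (min (max (γ i - θ) 0) 1) • vecMulVec (η i) (η i)) * Uᵀ)
          ∈ deflatedFantope (V * Vᵀ) ∧
      ∀ B ∈ deflatedFantope (V * Vᵀ),
        frobNorm (A - U * (∑ i, (min (max (γ i - θ) 0) 1) • vecMulVec (η i) (η i)) * Uᵀ)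
            ≤ frobNorm (A - B) ∧
        (frobNorm (A - B)
            = frobNorm (A - U * (∑ i, (min (max (γ i - θ) 0) 1) • vecMulVec (η i) (η i)) * Uᵀ)
          → B = U * (∑ i, (min (max (γ i - θ) 0) 1) • vecMulVec (η i) (η i)) * Uᵀ) :=
  stmt2_general hd A V hV U hU hVU γ η hη hdecomp
end

section
/- Let u and v be unit vectors in ℝ^p. Then ‖uuᵀ − vvᵀ‖_F ≤ √2·‖u − v‖₂; and if in addition ⟨u, v⟩ ≥ 0, then (1/√2)·‖u − v‖₂ ≤ ‖uuᵀ − vvᵀ‖_F. -/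
open Matrix Finset

noncomputable def l2norm {p : ℕ} (v : Fin p → ℝ) : ℝ := Real.sqrt (∑ i, (v i) ^ 2)

/-!
Write `t = ⟨u, v⟩`. Expanding the squares gives `‖uuᵀ - vvᵀ‖_F² = ‖u‖⁴ - 2t² + ‖v‖⁴` and
`‖u - v‖² = ‖u‖² - 2t + ‖v‖²`, i.e. `2 - 2t²` and `2 - 2t` for unit vectors. The upper bound is then
`(1 - t)² ≥ 0`, and the lower bound is `(1 - t)(1 + 2t) ≥ 0`, where `t ≤ 1` comes for free from
`‖u - v‖² ≥ 0`.
-/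

lemma frobNorm_sq {a b : ℕ} (A : Matrix (Fin a) (Fin b) ℝ) :
    frobNorm A ^ 2 = ∑ i, ∑ j, A i j ^ 2 :=
  Real.sq_sqrt (by positivity)

lemma l2norm_sq {p : ℕ} (v : Fin p → ℝ) : l2norm v ^ 2 = v ⬝ᵥ v := by
  rw [l2norm, Real.sq_sqrt (by positivity), dotProduct]
  simp only [sq]

lemma frobNorm_vecMulVec_self_sub_sq {p : ℕ} (u v : Fin p → ℝ) :
    frobNorm (vecMulVec u u - vecMulVec v v) ^ 2
      = (u ⬝ᵥ u) ^ 2 - 2 * (u ⬝ᵥ v) ^ 2 + (v ⬝ᵥ v) ^ 2 := by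
  rw [frobNorm_sq]
  simp only [dotProduct, sq]
  rw [sum_mul_sum, sum_mul_sum, sum_mul_sum]
  simp only [mul_sum, ← sum_sub_distrib, ← sum_add_distrib, Matrix.sub_apply, vecMulVec_apply]
  refine sum_congr rfl fun i _ => sum_congr rfl fun j _ => by ring

lemma l2norm_sub_sq {p : ℕ} (u v : Fin p → ℝ) :
    l2norm (u - v) ^ 2 = u ⬝ᵥ u - 2 * (u ⬝ᵥ v) + v ⬝ᵥ v := by
  rw [l2norm_sq, sub_dotProduct, dotProduct_sub, dotProduct_sub, dotProduct_comm v u]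
  ring

/-- For unit vectors u, v in ℝ^p, ‖uuᵀ − vvᵀ‖_F ≤ √2·‖u − v‖₂, and if
⟨u,v⟩ ≥ 0 then (1/√2)·‖u − v‖₂ ≤ ‖uuᵀ − vvᵀ‖_F. -/
theorem stmt7 {p : ℕ} (u v : Fin p → ℝ) (hu : l2norm u = 1) (hv : l2norm v = 1) :
    frobNorm (vecMulVec u u - vecMulVec v v) ≤ Real.sqrt 2 * l2norm (u - v) ∧
    ((0:ℝ) ≤ u ⬝ᵥ v →
      (1 / Real.sqrt 2) * l2norm (u - v) ≤ frobNorm (vecMulVec u u - vecMulVec v v)) := by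
  have huu : u ⬝ᵥ u = 1 := by rw [← l2norm_sq, hu, one_pow]
  have hvv : v ⬝ᵥ v = 1 := by rw [← l2norm_sq, hv, one_pow]
  have hF := frobNorm_vecMulVec_self_sub_sq u v
  have hL := l2norm_sub_sq u v
  rw [huu, hvv] at hF hL
  have hF0 : 0 ≤ frobNorm (vecMulVec u u - vecMulVec v v) := Real.sqrt_nonneg _
  have hL0 : 0 ≤ l2norm (u - v) := Real.sqrt_nonneg _
  have h2 : Real.sqrt 2 ^ 2 = 2 := Real.sq_sqrt zero_le_two
  constructor
  · refine (pow_le_pow_iff_left₀ hF0 (by positivity) two_ne_zero).1 ?_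
    rw [mul_pow, h2, hF, hL]
    nlinarith [sq_nonneg (1 - u ⬝ᵥ v)]
  · intro ht
    refine (pow_le_pow_iff_left₀ (by positivity) hF0 two_ne_zero).1 ?_
    rw [mul_pow, div_pow, h2, hF, hL]
    nlinarith [sq_nonneg (l2norm (u - v))]
end

section
/- Let Π be a p×p orthogonal projection matrix of rank d < p and U a p×(p−d) matrix whose columns form an orthonormal basis of the kernel of Π. Then a p×p symmetric matrix H belongs to the deflated Fantope D_Π if and only if H = UGUᵀ for some (p−d)×(p−d) symmetric matrix G with 0 ⪯ G ⪯ I and tr(G) = 1. In particular, every H ∈ D_Π satisfies ΠH = HΠ = 0. -/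
open Matrix Finset

/-!
Since `Π` is an orthogonal projection of trace `d` and the `p - d` orthonormal columns of `U` lie
in its kernel, `U Uᵀ = 1 - Π`: the difference `1 - Π - U Uᵀ` is idempotent of trace zero.
For `H ∈ D_Π`, the vanishing of `⟨H, Π⟩ = tr (H Π)` for two positive semidefinite matrices forces
`H Π = 0`, hence `H = (1 - Π) H (1 - Π) = U (Uᵀ H U) Uᵀ`. Conjugation by `U` or `Uᵀ` preserves the
trace and the bounds `0 ⪯ · ⪯ 1`, using `1 - U G Uᵀ = Π + U (1 - G) Uᵀ`.
-/

namespace Matrix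

variable {n m : Type*} [Fintype n] [Fintype m] [DecidableEq n]

theorem trace_eq_rank_of_isIdempotentElem {K : Type*} [Field K] {P : Matrix n n K}
    (hP : IsIdempotentElem P) : P.trace = P.rank := by
  have hlin : IsIdempotentElem (toLin' P) := hP.map toLinAlgEquiv'
  rw [← trace_toLin'_eq, (LinearMap.IsIdempotentElem.isProj_range _ hlin).trace]
  rfl

open scoped ComplexOrder MatrixOrder in
/-- Writing `A = Lᴴ L` and `B = Mᴴ M`, `tr (A B)` is the squared Frobenius norm of `M Lᴴ`. -/
theorem PosSemidef.mul_eq_zero_of_trace_mul_eq_zero {𝕜 : Type*} [RCLike 𝕜] {A B : Matrix n n 𝕜}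
    (hA : A.PosSemidef) (hB : B.PosSemidef) (h : (A * B).trace = 0) : A * B = 0 := by
  obtain ⟨L, rfl⟩ := CStarAlgebra.nonneg_iff_eq_star_mul_self.mp hA.nonneg
  obtain ⟨M, rfl⟩ := CStarAlgebra.nonneg_iff_eq_star_mul_self.mp hB.nonneg
  simp only [star_eq_conjTranspose] at h ⊢
  have hML : M * Lᴴ = 0 := by
    rw [← trace_conjTranspose_mul_self_eq_zero_iff, ← h, trace_mul_comm (Lᴴ * L),
      conjTranspose_mul, conjTranspose_conjTranspose]
    simp only [Matrix.mul_assoc]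
    rw [trace_mul_comm L]
    simp only [Matrix.mul_assoc]
  calc Lᴴ * L * (Mᴴ * M) = Lᴴ * (M * Lᴴ)ᴴ * M := by
        simp only [conjTranspose_mul, conjTranspose_conjTranspose, Matrix.mul_assoc]
    _ = 0 := by rw [hML, conjTranspose_zero, Matrix.mul_zero, Matrix.zero_mul]

omit [DecidableEq n] in
open scoped MatrixOrder in
theorem PosSemidef.of_isSymm_of_isIdempotentElem {P : Matrix n n ℝ} (hPsymm : P.IsSymm)
    (hP : IsIdempotentElem P) : P.PosSemidef :=
  (IsStarProjection.nonneg ⟨hP, isHermitian_iff_isSymm.mpr hPsymm⟩).posSemidef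

omit [DecidableEq n] in
theorem isIdempotentElem_mul_transpose {R : Type*} [Semiring R] [DecidableEq m] {U : Matrix n m R}
    (hU : Uᵀ * U = 1) : IsIdempotentElem (U * Uᵀ) := by
  rw [IsIdempotentElem, Matrix.mul_assoc, ← Matrix.mul_assoc Uᵀ, hU, Matrix.one_mul]

theorem eq_zero_of_isIdempotentElem_of_trace_eq_zero {K : Type*} [Field K] [CharZero K]
    {Q : Matrix n n K} (hQ : IsIdempotentElem Q) (h : Q.trace = 0) : Q = 0 := by
  have hlin : IsIdempotentElem (toLin' Q) := hQ.map toLinAlgEquiv'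
  rw [← trace_toLin'_eq] at h
  exact toLin'.injective (by simpa using LinearMap.IsIdempotentElem.eq_zero_of_trace_eq_zero hlin h)

theorem mul_transpose_eq_one_sub {K : Type*} [Field K] [CharZero K] [DecidableEq m]
    {P : Matrix n n K} {U : Matrix n m K} (hPsymm : P.IsSymm) (hP : IsIdempotentElem P)
    (hU : Uᵀ * U = 1) (hPU : P * U = 0) (hrank : P.rank + Fintype.card m = Fintype.card n) :
    U * Uᵀ = 1 - P := by
  have hUP : Uᵀ * P = 0 := by rw [← hPsymm.eq, ← transpose_mul, hPU, transpose_zero]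
  have hPUU : P * (U * Uᵀ) = 0 := by rw [← Matrix.mul_assoc, hPU, Matrix.zero_mul]
  have hUUP : U * Uᵀ * P = 0 := by rw [Matrix.mul_assoc, hUP, Matrix.mul_zero]
  have hUU : U * Uᵀ * (U * Uᵀ) = U * Uᵀ := isIdempotentElem_mul_transpose hU
  have hUUtrace : (U * Uᵀ).trace = Fintype.card m := by rw [trace_mul_comm, hU, trace_one]
  have hQ : IsIdempotentElem (1 - P - U * Uᵀ) := by
    calc (1 - P - U * Uᵀ) * (1 - P - U * Uᵀ) = 1 - P - U * Uᵀ - (P - P * P - P * (U * Uᵀ))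
          - (U * Uᵀ - U * Uᵀ * P - U * Uᵀ * (U * Uᵀ)) := by noncomm_ring
      _ = 1 - P - U * Uᵀ := by rw [hP.eq, hPUU, hUUP, hUU]; abel
  have hQtrace : (1 - P - U * Uᵀ).trace = 0 := by
    rw [trace_sub, trace_sub, trace_one, hUUtrace, trace_eq_rank_of_isIdempotentElem hP, ← hrank]
    push_cast; ring
  exact (sub_eq_zero.mp (eq_zero_of_isIdempotentElem_of_trace_eq_zero hQ hQtrace)).symm

end Matrix

variable {p q : ℕ}

theorem conj_mem_fantope1 {U : Matrix (Fin p) (Fin q) ℝ} (hU : Uᵀ * U = 1)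
    {G : Matrix (Fin q) (Fin q) ℝ} (hG : G ∈ fantope1) : U * G * Uᵀ ∈ fantope1 := by
  obtain ⟨hG0, hG1, hGtrace⟩ := hG
  have hUU : (1 - U * Uᵀ).PosSemidef :=
    .of_isSymm_of_isIdempotentElem (by simp [IsSymm, transpose_mul])
      (isIdempotentElem_mul_transpose hU).one_sub
  refine ⟨?_, ?_, ?_⟩
  · simpa [conjTranspose_eq_transpose_of_trivial] using hG0.mul_mul_conjTranspose_same U
  · have h : 1 - U * G * Uᵀ = (1 - U * Uᵀ) + U * (1 - G) * Uᵀ := by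
      rw [Matrix.mul_sub, Matrix.sub_mul, Matrix.mul_one]; abel
    rw [h]
    exact hUU.add (by simpa [conjTranspose_eq_transpose_of_trivial] using
      hG1.mul_mul_conjTranspose_same U)
  · rw [trace_mul_cycle, hU, Matrix.one_mul, hGtrace]

theorem transpose_conj_mem_fantope1 {U : Matrix (Fin p) (Fin q) ℝ} (hU : Uᵀ * U = 1)
    {H : Matrix (Fin p) (Fin p) ℝ} (hH : H ∈ fantope1) (hHU : H * (U * Uᵀ) = H) :
    Uᵀ * H * U ∈ fantope1 := by
  obtain ⟨hH0, hH1, hHtrace⟩ := hH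
  refine ⟨?_, ?_, ?_⟩
  · simpa [conjTranspose_eq_transpose_of_trivial] using hH0.conjTranspose_mul_mul_same U
  · have h : 1 - Uᵀ * H * U = Uᵀ * (1 - H) * U := by
      rw [Matrix.mul_sub, Matrix.sub_mul, Matrix.mul_one, hU]
    rw [h]
    simpa [conjTranspose_eq_transpose_of_trivial] using hH1.conjTranspose_mul_mul_same U
  · rw [Matrix.mul_assoc, trace_mul_comm, Matrix.mul_assoc, hHU, hHtrace]

theorem mul_eq_zero_of_mem_deflatedFantope {P H : Matrix (Fin p) (Fin p) ℝ} (hPsymm : P.IsSymm)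
    (hP : IsIdempotentElem P) (hH : H ∈ deflatedFantope P) : P * H = 0 ∧ H * P = 0 := by
  obtain ⟨⟨hH0, -, -⟩, hHP⟩ := hH
  have hHsymm : Hᵀ = H := isHermitian_iff_isSymm.mp hH0.isHermitian
  have hHP0 : H * P = 0 := hH0.mul_eq_zero_of_trace_mul_eq_zero
    (.of_isSymm_of_isIdempotentElem hPsymm hP) (by rwa [frobInner, hHsymm] at hHP)
  refine ⟨?_, hHP0⟩
  rw [← hHsymm, ← hPsymm.eq, ← transpose_mul, hHP0, transpose_zero]

theorem conj_mem_deflatedFantope_s10 {P : Matrix (Fin p) (Fin p) ℝ} {U : Matrix (Fin p) (Fin q) ℝ}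
    (hU : Uᵀ * U = 1) (hUP : Uᵀ * P = 0) {G : Matrix (Fin q) (Fin q) ℝ} (hG : G ∈ fantope1) :
    U * G * Uᵀ ∈ deflatedFantope P := by
  refine ⟨conj_mem_fantope1 hU hG, ?_⟩
  rw [frobInner, transpose_mul, transpose_mul, transpose_transpose]
  simp only [Matrix.mul_assoc, hUP, Matrix.mul_zero, trace_zero]

/-- Let Π be a p×p orthogonal projection of rank d < p and U a p×(p−d) matrix
whose columns form an orthonormal basis of ker Π.  Then H ∈ D_Π iff H = UGUᵀ for some
symmetric G with 0 ⪯ G ⪯ I and tr G = 1; in particular every H ∈ D_Π satisfies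
ΠH = HΠ = 0. -/
theorem stmt10 {p d : ℕ} (hd : d < p)
    (P : Matrix (Fin p) (Fin p) ℝ) (hPsymm : P.IsSymm) (hPproj : P * P = P)
    (hrank : P.rank = d)
    (U : Matrix (Fin p) (Fin (p - d)) ℝ) (hUorth : Uᵀ * U = 1) (hUker : P * U = 0) :
    (∀ H : Matrix (Fin p) (Fin p) ℝ,
      H ∈ deflatedFantope P ↔
        ∃ G : Matrix (Fin (p - d)) (Fin (p - d)) ℝ,
          G.PosSemidef ∧ ((1 : Matrix (Fin (p - d)) (Fin (p - d)) ℝ) - G).PosSemidef ∧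
          G.trace = 1 ∧ H = U * G * Uᵀ) ∧
    (∀ H ∈ deflatedFantope P, P * H = 0 ∧ H * P = 0) := by
  have hUU : U * Uᵀ = 1 - P := mul_transpose_eq_one_sub hPsymm hPproj hUorth hUker
    (by simp [hrank, Nat.add_sub_of_le hd.le])
  have hUP : Uᵀ * P = 0 := by rw [← hPsymm.eq, ← transpose_mul, hUker, transpose_zero]
  have hannih : ∀ H ∈ deflatedFantope P, P * H = 0 ∧ H * P = 0 :=
    fun H hH => mul_eq_zero_of_mem_deflatedFantope hPsymm hPproj hH
  refine ⟨fun H => ⟨fun hH => ?_, ?_⟩, hannih⟩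
  · obtain ⟨hPH, hHP⟩ := hannih H hH
    have hHUU : H * (U * Uᵀ) = H := by rw [hUU, Matrix.mul_sub, Matrix.mul_one, hHP, sub_zero]
    have hUUH : U * Uᵀ * H = H := by rw [hUU, Matrix.sub_mul, Matrix.one_mul, hPH, sub_zero]
    obtain ⟨hG0, hG1, hGtrace⟩ := transpose_conj_mem_fantope1 hUorth hH.1 hHUU
    refine ⟨Uᵀ * H * U, hG0, hG1, hGtrace, ?_⟩
    calc H = U * Uᵀ * H * (U * Uᵀ) := by rw [hUUH, hHUU]
      _ = U * (Uᵀ * H * U) * Uᵀ := by simp only [Matrix.mul_assoc]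
  · rintro ⟨G, hG0, hG1, hGtrace, rfl⟩
    exact conj_mem_deflatedFantope_s10 hUorth hUP ⟨hG0, hG1, hGtrace⟩
end

section
/- Let H ∈ F¹, let Π and Π̂ be p×p orthogonal projection matrices with ⟨H, Π̂⟩ = 0, and let Σ be a p×p symmetric positive-semidefinite matrix with Σ ⪯ λI for some λ ≥ 0. Then ⟨ΠΣΠ, H⟩ ≤ λ·‖Π − Π̂‖_F. (In particular ‖H‖_F ≤ 1 for every H ∈ F¹.) -/
open Matrix Finset

/-!
Since `H` is symmetric, `⟨ΠΣΠ, H⟩ = tr(Σ · ΠHΠ)`. As `ΠHΠ ⪰ 0` and `Σ ⪯ λI`, this is at most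
`λ tr(ΠHΠ) = λ tr(HΠ) = λ ⟨H, Π - Π̂⟩`, using `Π² = Π` and `⟨H, Π̂⟩ = 0`. Cauchy–Schwarz finishes,
because `‖H‖_F² = tr(H²) ≤ tr H = 1`, the inequality being `tr(H(I - H)) ≥ 0`.
-/

namespace Matrix.PosSemidef

open scoped ComplexOrder

variable {n 𝕜 : Type*} [Fintype n] [RCLike 𝕜]

lemma trace_mul_nonneg {A B : Matrix n n 𝕜} (hA : A.PosSemidef) (hB : B.PosSemidef) :
    0 ≤ (A * B).trace := by
  classical
  open scoped MatrixOrder Matrix.Norms.L2Operator in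
  obtain ⟨L, rfl⟩ := CStarAlgebra.nonneg_iff_eq_star_mul_self.mp hA.nonneg
  rw [Matrix.mul_assoc, trace_mul_comm, Matrix.mul_assoc, star_eq_conjTranspose,
    ← Matrix.mul_assoc]
  exact (hB.mul_mul_conjTranspose_same L).trace_nonneg

lemma trace_mul_le_smul_trace [DecidableEq n] {S M : Matrix n n 𝕜} {c : 𝕜}
    (hS : (c • 1 - S).PosSemidef) (hM : M.PosSemidef) : (S * M).trace ≤ c * M.trace := by
  have := hS.trace_mul_nonneg hM
  rwa [Matrix.sub_mul, Matrix.smul_mul, Matrix.one_mul, trace_sub, trace_smul, smul_eq_mul,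
    sub_nonneg] at this

lemma trace_mul_self_le_trace [DecidableEq n] {A : Matrix n n 𝕜} (hA : A.PosSemidef)
    (hA₁ : (1 - A).PosSemidef) : (A * A).trace ≤ A.trace := by
  simpa using trace_mul_le_smul_trace (c := (1 : 𝕜)) (by simpa using hA₁) hA

end Matrix.PosSemidef

section Frobenius

variable {p : ℕ}

lemma frobInner_le_frobNorm_mul (A B : Matrix (Fin p) (Fin p) ℝ) :
    frobInner A B ≤ frobNorm A * frobNorm B := by
  simp only [frobInner_eq_sum, frobNorm, ← Finset.sum_product' univ univ]
  exact Real.sum_mul_le_sqrt_mul_sqrt _ _ _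

lemma frobInner_sub_right (A B C : Matrix (Fin p) (Fin p) ℝ) :
    frobInner A (B - C) = frobInner A B - frobInner A C := by
  simp only [frobInner, Matrix.mul_sub, trace_sub]

lemma frobInner_eq_trace_mul_of_isSymm {A B : Matrix (Fin p) (Fin p) ℝ} (hB : B.IsSymm) :
    frobInner A B = (A * B).trace := by
  rw [frobInner, ← hB.eq, trace_transpose_mul, hB.eq]

lemma sq_frobNorm_of_isSymm {A : Matrix (Fin p) (Fin p) ℝ} (hA : A.IsSymm) :
    frobNorm A ^ 2 = (A * A).trace := by
  rw [frobNorm, Real.sq_sqrt (by positivity), ← frobInner_eq_trace_mul_of_isSymm hA,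
    frobInner_eq_sum]
  simp only [sq]

lemma frobNorm_nonneg {a b : ℕ} (A : Matrix (Fin a) (Fin b) ℝ) : 0 ≤ frobNorm A :=
  Real.sqrt_nonneg _

end Frobenius

lemma frobNorm_le_one_of_mem_fantope1 {p : ℕ} {H : Matrix (Fin p) (Fin p) ℝ}
    (hH : H ∈ fantope1) : frobNorm H ≤ 1 := by
  obtain ⟨hH₀, hH₁, htr⟩ := hH
  rw [← sq_le_one_iff₀ (frobNorm_nonneg H),
    sq_frobNorm_of_isSymm (isHermitian_iff_isSymm.mp hH₀.1), ← htr]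
  exact hH₀.trace_mul_self_le_trace hH₁

lemma Matrix.PosSemidef.mul_mul_same_of_isSymm {n : Type*} [Fintype n] {H P : Matrix n n ℝ}
    (hH : H.PosSemidef) (hP : P.IsSymm) : (P * H * P).PosSemidef := by
  simpa [hP.eq] using hH.mul_mul_conjTranspose_same P

lemma Matrix.trace_mul_mul_of_idempotent {n R : Type*} [Fintype n] [CommSemiring R]
    {P : Matrix n n R} (hP : P * P = P) (H : Matrix n n R) :
    (P * H * P).trace = (H * P).trace := by
  rw [trace_mul_cycle, hP, trace_mul_comm]

theorem stmt13_general {p : ℕ} (H P Phat Sig : Matrix (Fin p) (Fin p) ℝ) (lam : ℝ)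
    (hH : H ∈ fantope1)
    (hPsymm : P.IsSymm) (hPproj : P * P = P)
    (horth : frobInner H Phat = 0)
    (hlam : 0 ≤ lam)
    (hSigle : (lam • (1 : Matrix (Fin p) (Fin p) ℝ) - Sig).PosSemidef) :
    frobInner (P * Sig * P) H ≤ lam * frobNorm (P - Phat) ∧
    (∀ H' ∈ fantope1 (p := p), frobNorm H' ≤ 1) := by
  refine ⟨?_, fun _ => frobNorm_le_one_of_mem_fantope1⟩
  have hHsymm : H.IsSymm := isHermitian_iff_isSymm.mp hH.1.1
  calc frobInner (P * Sig * P) H = (Sig * (P * H * P)).trace := by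
        simp only [frobInner_eq_trace_mul_of_isSymm hHsymm, Matrix.mul_assoc]
        rw [trace_mul_comm P]
        simp only [Matrix.mul_assoc]
    _ ≤ lam * (P * H * P).trace :=
        hSigle.trace_mul_le_smul_trace (hH.1.mul_mul_same_of_isSymm hPsymm)
    _ = lam * frobInner H (P - Phat) := by
        rw [frobInner_sub_right, horth, sub_zero, frobInner, hHsymm.eq,
          trace_mul_mul_of_idempotent hPproj]
    _ ≤ lam * (frobNorm H * frobNorm (P - Phat)) := by
        gcongr
        exact frobInner_le_frobNorm_mul _ _
    _ ≤ lam * frobNorm (P - Phat) := by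
        gcongr
        exact mul_le_of_le_one_left (frobNorm_nonneg _) (frobNorm_le_one_of_mem_fantope1 hH)

/-- For H ∈ F¹, orthogonal projections Π, Π̂ with ⟨H, Π̂⟩ = 0, and a
symmetric PSD Σ with Σ ⪯ λI (λ ≥ 0), one has ⟨ΠΣΠ, H⟩ ≤ λ‖Π − Π̂‖_F; in particular
every member of F¹ has Frobenius norm at most 1. -/
theorem stmt13 {p : ℕ} (H P Phat Sig : Matrix (Fin p) (Fin p) ℝ) (lam : ℝ)
    (hH : H ∈ fantope1)
    (hPsymm : P.IsSymm) (hPproj : P * P = P)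
    (hPhsymm : Phat.IsSymm) (hPhproj : Phat * Phat = Phat)
    (horth : frobInner H Phat = 0)
    (hSig : Sig.PosSemidef) (hlam : 0 ≤ lam)
    (hSigle : (lam • (1 : Matrix (Fin p) (Fin p) ℝ) - Sig).PosSemidef) :
    frobInner (P * Sig * P) H ≤ lam * frobNorm (P - Phat) ∧
    (∀ H' ∈ fantope1 (p := p), frobNorm H' ≤ 1) :=
  stmt13_general H P Phat Sig lam hH hPsymm hPproj horth hlam hSigle
end

section
/- Let M be a p×p real symmetric matrix and let K : [0,1]² → ℝ be the piecewise-constant kernel K(s,t) = M_{ij} for s ∈ I_i, t ∈ I_j. If φ̃ ∈ L²(0,1) is an eigenfunction of the integral operator f ↦ ∫₀¹ K(·,s)f(s) ds with eigenvalue λ̃ ≠ 0, then φ̃ is almost everywhere equal to a function that is constant on each interval I_i, and the vector v ∈ ℝ^p whose i-th entry is p^{−1/2} times the value of φ̃ on I_i satisfies Mv = pλ̃·v and ‖v‖₂ = ‖φ̃‖_{L²(0,1)}. -/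
open Matrix Finset MeasureTheory

/-- Index (0-based) of the interval I_l containing t, where I₁ = [0,1/p] and
I_l = ((l−1)/p, l/p] for 2 ≤ l ≤ p. -/
noncomputable def idxFin (p : ℕ) (hp : 0 < p) (t : ℝ) : Fin p :=
  ⟨min (p - 1) (max 1 ⌈(p : ℝ) * t⌉₊ - 1), by omega⟩

/-!
For `t ∈ I_i` the integral `∫₀¹ K(t,s) f(s) ds` depends only on `i`, so the eigenvalue equation
with `λ̃ ≠ 0` forces `f` to be a.e. a step function with some values `c_i`. Integrating a step
function over `[0,1]` averages its values with weight `1/p`; applied to the eigenvalue equation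
this gives `M c = p λ̃ c`, and applied to `f²` it gives `‖f‖² = ‖c‖₂² / p`.
-/

section StepFunctions

variable {p : ℕ} (hp : 0 < p)

lemma idxFin_eqOn_Ioc (j : Fin p) :
    Set.EqOn (idxFin p hp) (fun _ => j) (Set.Ioc ((j : ℝ) / p) (((j : ℝ) + 1) / p)) := by
  intro s hs
  have hp' : (0 : ℝ) < p := Nat.cast_pos.mpr hp
  rw [Set.mem_Ioc, div_lt_iff₀ hp', le_div_iff₀ hp'] at hs
  have hceil : ⌈(p : ℝ) * s⌉₊ = (j : ℕ) + 1 := by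
    rw [Nat.ceil_eq_iff (by omega)]
    push_cast
    constructor <;> linarith
  have := j.isLt
  ext
  simp only [idxFin, hceil]
  omega

lemma intervalIntegrable_comp_idxFin_Ioc (G : Fin p → ℝ) (j : Fin p) :
    IntervalIntegrable (fun s => G (idxFin p hp s)) volume ((j : ℝ) / p) (((j : ℝ) + 1) / p) := by
  have hle : (j : ℝ) / p ≤ ((j : ℝ) + 1) / p := by gcongr; linarith
  exact (intervalIntegrable_iff_integrableOn_Ioc_of_le hle).mpr
    ((integrableOn_const (by simp)).congr_fun ((idxFin_eqOn_Ioc hp j).comp_left (g := G)).symm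
      measurableSet_Ioc)

lemma intervalIntegral_comp_idxFin_Ioc (G : Fin p → ℝ) (j : Fin p) :
    ∫ s in (j : ℝ) / p..((j : ℝ) + 1) / p, G (idxFin p hp s) = G j / p := by
  have hle : (j : ℝ) / p ≤ ((j : ℝ) + 1) / p := by gcongr; linarith
  rw [intervalIntegral.integral_of_le hle,
    setIntegral_congr_fun (f := fun s => G (idxFin p hp s)) (g := fun _ => G j)
      measurableSet_Ioc ((idxFin_eqOn_Ioc hp j).comp_left (g := G)),
    setIntegral_const, measureReal_def, Real.volume_Ioc, ENNReal.toReal_ofReal (sub_nonneg.mpr hle),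
    smul_eq_mul]
  ring

lemma integral_comp_idxFin (G : Fin p → ℝ) :
    ∫ s in Set.Ioc (0 : ℝ) 1, G (idxFin p hp s) = (∑ j, G j) / p := by
  have hp' : (p : ℝ) ≠ 0 := Nat.cast_ne_zero.mpr hp.ne'
  set a : ℕ → ℝ := fun k => (k : ℝ) / p
  have hint : ∀ k < p, IntervalIntegrable (fun s => G (idxFin p hp s)) volume (a k) (a (k + 1)) :=
    fun k hk => by simpa [a] using intervalIntegrable_comp_idxFin_Ioc hp G ⟨k, hk⟩
  rw [← intervalIntegral.integral_of_le zero_le_one,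
    show (0 : ℝ) = a 0 by simp [a], show (1 : ℝ) = a p by simp [a, hp'],
    ← intervalIntegral.sum_integral_adjacent_intervals hint,
    ← Fin.sum_univ_eq_sum_range (fun k => ∫ s in a k..a (k + 1), G (idxFin p hp s)), sum_div]
  exact sum_congr rfl fun j _ => by simpa [a] using intervalIntegral_comp_idxFin_Ioc hp G j

lemma integral_comp_idxFin_of_ae_eq {f : ℝ → ℝ} {c : Fin p → ℝ}
    (hf : f =ᵐ[volume.restrict (Set.Ioc 0 1)] fun t => c (idxFin p hp t)) (g : Fin p → ℝ → ℝ) :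
    ∫ s in Set.Ioc (0 : ℝ) 1, g (idxFin p hp s) (f s) = (∑ j, g j (c j)) / p := by
  rw [← integral_comp_idxFin hp fun j => g j (c j)]
  exact integral_congr_ae (hf.mono fun s hs => congrArg (g (idxFin p hp s)) hs)

end StepFunctions

section Eigenfunctions

variable {p : ℕ} (hp : 0 < p) (M : Matrix (Fin p) (Fin p) ℝ)

/-- The value of `∫₀¹ K(t,s) f(s) ds` for `t ∈ I_i`. -/
noncomputable def stepKernelApply (f : ℝ → ℝ) (i : Fin p) : ℝ :=
  ∫ s in Set.Ioc (0 : ℝ) 1, M i (idxFin p hp s) * f s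

variable {f : ℝ → ℝ}

lemma ae_eq_comp_idxFin_of_eigen {lamt : ℝ} (hlamt : lamt ≠ 0)
    (heig : ∀ᵐ t ∂(volume.restrict (Set.Ioc (0:ℝ) 1)),
      ∫ s in (0:ℝ)..1, M (idxFin p hp t) (idxFin p hp s) * f s = lamt * f t) :
    f =ᵐ[volume.restrict (Set.Ioc 0 1)] fun t => (lamt⁻¹ • stepKernelApply hp M f) (idxFin p hp t) := by
  filter_upwards [heig] with t ht
  rw [intervalIntegral.integral_of_le zero_le_one] at ht
  simp only [stepKernelApply, Pi.smul_apply, smul_eq_mul, ht]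
  field_simp

lemma stepKernelApply_eq_mulVec {c : Fin p → ℝ}
    (hf : f =ᵐ[volume.restrict (Set.Ioc 0 1)] fun t => c (idxFin p hp t)) :
    stepKernelApply hp M f = (p : ℝ)⁻¹ • M *ᵥ c := by
  ext i
  rw [stepKernelApply, integral_comp_idxFin_of_ae_eq hp hf fun j y => M i j * y]
  simp [mulVec, dotProduct, div_eq_inv_mul]

lemma integral_sq_eq_of_ae_eq {c : Fin p → ℝ}
    (hf : f =ᵐ[volume.restrict (Set.Ioc 0 1)] fun t => c (idxFin p hp t)) :
    ∫ t in (0 : ℝ)..1, f t ^ 2 = (∑ j, c j ^ 2) / p := by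
  rw [intervalIntegral.integral_of_le zero_le_one]
  exact integral_comp_idxFin_of_ae_eq hp hf fun _ y => y ^ 2

end Eigenfunctions

lemma l2norm_inv_sqrt_mul (p : ℕ) (c : Fin p → ℝ) :
    l2norm (fun i => (Real.sqrt p)⁻¹ * c i) = Real.sqrt ((∑ j, c j ^ 2) / p) := by
  simp only [l2norm, mul_pow, inv_pow, Real.sq_sqrt (Nat.cast_nonneg p), ← mul_sum, div_eq_inv_mul]

theorem stmt17_general (p : ℕ) (hp : 0 < p) (M : Matrix (Fin p) (Fin p) ℝ)
    (lamt : ℝ) (hlamt : lamt ≠ 0) (f : ℝ → ℝ)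
    (heig : ∀ᵐ t ∂(volume.restrict (Set.Ioc (0:ℝ) 1)),
      ∫ s in (0:ℝ)..1, M (idxFin p hp t) (idxFin p hp s) * f s = lamt * f t) :
    ∃ c : Fin p → ℝ,
      (∀ᵐ t ∂(volume.restrict (Set.Ioc (0:ℝ) 1)), f t = c (idxFin p hp t)) ∧
      M *ᵥ (fun i => (Real.sqrt p)⁻¹ * c i) = ((p : ℝ) * lamt) • (fun i => (Real.sqrt p)⁻¹ * c i) ∧
      l2norm (fun i => (Real.sqrt p)⁻¹ * c i) = Real.sqrt (∫ t in (0:ℝ)..1, f t ^ 2) := by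
  have hp' : (p : ℝ) ≠ 0 := Nat.cast_ne_zero.mpr hp.ne'
  have hf := ae_eq_comp_idxFin_of_eigen hp M hlamt heig
  set S := stepKernelApply hp M f
  have hMc : M *ᵥ (lamt⁻¹ • S) = ((p : ℝ) * lamt) • (lamt⁻¹ • S) := by
    have hS : S = (p : ℝ)⁻¹ • M *ᵥ (lamt⁻¹ • S) := stepKernelApply_eq_mulVec hp M hf
    rw [smul_smul, mul_assoc, mul_inv_cancel₀ hlamt, mul_one]
    conv_rhs => rw [hS, smul_smul, mul_inv_cancel₀ hp', one_smul]
  refine ⟨lamt⁻¹ • S, hf, ?_, ?_⟩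
  · change M *ᵥ ((Real.sqrt p)⁻¹ • lamt⁻¹ • S) = ((p : ℝ) * lamt) • ((Real.sqrt p)⁻¹ • lamt⁻¹ • S)
    rw [mulVec_smul, hMc, smul_comm]
  · rw [l2norm_inv_sqrt_mul, integral_sq_eq_of_ae_eq hp hf]

/-- if f ∈ L²(0,1) is an eigenfunction, with eigenvalue λ̃ ≠ 0, of the integral
operator with piecewise-constant kernel K(s,t) = M_{ij} on I_i × I_j, then f agrees a.e. with
a function constant on each I_i, and the vector v with v_i = p^{-1/2}·(value on I_i)
satisfies Mv = pλ̃·v and ‖v‖₂ = ‖f‖_{L²(0,1)}. -/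
theorem stmt17 (p : ℕ) (hp : 0 < p) (M : Matrix (Fin p) (Fin p) ℝ) (hM : M.IsSymm)
    (lamt : ℝ) (hlamt : lamt ≠ 0) (f : ℝ → ℝ)
    (hfL2 : MeasureTheory.MemLp f 2 (volume.restrict (Set.Ioc (0:ℝ) 1)))
    (hfne : ¬ f =ᵐ[volume.restrict (Set.Ioc (0:ℝ) 1)] 0)
    (heig : ∀ᵐ t ∂(volume.restrict (Set.Ioc (0:ℝ) 1)),
      ∫ s in (0:ℝ)..1, M (idxFin p hp t) (idxFin p hp s) * f s = lamt * f t) :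
    ∃ c : Fin p → ℝ,
      (∀ᵐ t ∂(volume.restrict (Set.Ioc (0:ℝ) 1)), f t = c (idxFin p hp t)) ∧
      M *ᵥ (fun i => (Real.sqrt p)⁻¹ * c i) = ((p : ℝ) * lamt) • (fun i => (Real.sqrt p)⁻¹ * c i) ∧
      l2norm (fun i => (Real.sqrt p)⁻¹ * c i) = Real.sqrt (∫ t in (0:ℝ)..1, f t ^ 2) :=
  stmt17_general p hp M lamt hlamt f heig
end
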